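/- Let π ∈ S_{n+1} be boolean and let w be any reduced expression of π that is a subsequence of the word (s_1, …, s_{n−1}, s_n, s_{n−1}, …, s_1). Then for each 1 ≤ i ≤ n: the generator s_i occurs exactly once in w if and only if π(i+1) ≠ i+1 and π({1,…,i}) ≠ {1,…,i}; and in that case i+1 is a top excedance of π or a top excedance of π^{-1}. -/

import Mathlib

/-- The `i`-th adjacent transposition `s_{i+1}` (1-indexed `s_1, …, s_n`) in the
symmetric group `S_{n+1}`, realized as permutations of `Fin (n+1)`. -/
def adjTransposition (n : ℕ) (i : Fin n) : Equiv.Perm (Fin (n + 1)) :=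
  Equiv.swap i.castSucc i.succ

/-- The product of a word in the adjacent transpositions. -/
def wordProdA (n : ℕ) (w : List (Fin n)) : Equiv.Perm (Fin (n + 1)) :=
  (w.map (adjTransposition n)).prod

/-- A word in the generators is reduced if no shorter word has the same product. -/
def ReducedA (n : ℕ) (w : List (Fin n)) : Prop :=
  ∀ w' : List (Fin n), wordProdA n w' = wordProdA n w → w.length ≤ w'.length

/-- An element is a boolean reflection if it admits a reduced expression of the form
`s_{j_1} ⋯ s_{j_{k-1}} s_{j_k} s_{j_{k-1}} ⋯ s_{j_1}` with `j_1, …, j_k` pairwise distinct. -/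
def IsBooleanReflectionA (n : ℕ) (t : Equiv.Perm (Fin (n + 1))) : Prop :=
  ∃ (l : List (Fin n)) (c : Fin n), (l ++ [c]).Nodup ∧
    ReducedA n (l ++ [c] ++ l.reverse) ∧ wordProdA n (l ++ [c] ++ l.reverse) = t

/-- A permutation is boolean if it is the product of some subsequence of a
boolean expression. -/
def IsBooleanA (n : ℕ) (π : Equiv.Perm (Fin (n + 1))) : Prop :=
  ∃ (l : List (Fin n)) (c : Fin n), (l ++ [c]).Nodup ∧
    ReducedA n (l ++ [c] ++ l.reverse) ∧
    ∃ w : List (Fin n), w.Sublist (l ++ [c] ++ l.reverse) ∧ wordProdA n w = π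

/-- The top boolean word `s_1 s_2 ⋯ s_{n-1} s_n s_{n-1} ⋯ s_2 s_1`. -/
def topWordA (n : ℕ) : List (Fin n) :=
  List.finRange n ++ ((List.finRange n).dropLast).reverse

/-!
A subword of `s_1 ⋯ s_{n-1} s_n s_{n-1} ⋯ s_1` is an increasing word `u` followed by a
decreasing word `v`, so `s_i` occurs in it at most twice. If `s_i` occurs in `u`, then `u` carries
`i` to `i+1`; if it occurs in `v`, then `v` carries `i+1` to `i`; the letters other than `s_i`
preserve `{1, …, i}`. Hence if `s_i` occurs in neither, `π` preserves `{1, …, i}`; if in both,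
`π` fixes `i+1`; if only in `u`, then `π⁻¹(i+1) ≤ i`; and if only in `v`, then `π(i+1) ≤ i`.
-/

open Equiv Finset

section FilterValLe

variable {m : ℕ} (σ : Perm (Fin m)) (k : ℕ)

theorem image_filter_val_le_eq_self_iff :
    (univ.filter (fun x : Fin m => x.val ≤ k)).image σ = univ.filter (fun x : Fin m => x.val ≤ k) ↔
      ∀ x, (σ x).val ≤ k ↔ x.val ≤ k := by
  constructor
  · intro h x
    have := σ.injective.mem_finset_image (s := univ.filter (fun x : Fin m => x.val ≤ k)) (a := x)
    rw [h] at this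
    simpa using this
  · intro h
    refine eq_of_subset_of_card_le (image_subset_iff.mpr fun x hx => ?_)
      (card_image_of_injective _ σ.injective).ge
    simpa [h] using hx

variable {σ k}

theorem image_filter_val_le_ne_of_apply {x : Fin m} (hx : k < x.val) (hσx : (σ x).val ≤ k) :
    (univ.filter (fun x : Fin m => x.val ≤ k)).image σ ≠ univ.filter (fun x : Fin m => x.val ≤ k) :=
  fun h => by have := ((image_filter_val_le_eq_self_iff σ k).mp h x).mp hσx; omega

theorem image_filter_val_le_ne_of_symm_apply {x : Fin m} (hx : k < x.val)
    (hσx : (σ.symm x).val ≤ k) :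
    (univ.filter (fun x : Fin m => x.val ≤ k)).image σ ≠ univ.filter (fun x : Fin m => x.val ≤ k) :=
  fun h => by
    have := ((image_filter_val_le_eq_self_iff σ k).mp h (σ.symm x)).mpr hσx
    rw [σ.apply_symm_apply] at this
    omega

end FilterValLe

theorem apply_succ_ne_and_image_ne_of_lt {n : ℕ} {σ : Perm (Fin (n + 1))} {g : Fin n}
    (h : σ.symm g.succ < g.succ ∨ σ g.succ < g.succ) :
    σ g.succ ≠ g.succ ∧
      (univ.filter (fun x : Fin (n + 1) => x.val ≤ g.val)).image (fun x => σ x) ≠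
        univ.filter (fun x : Fin (n + 1) => x.val ≤ g.val) := by
  have hg : g.val < g.succ.val := by simp
  rcases h with h | h
  · refine ⟨fun hfix => h.ne (σ.symm_apply_eq.mpr hfix.symm), ?_⟩
    rw [Fin.lt_def, Fin.val_succ] at h
    exact image_filter_val_le_ne_of_symm_apply hg (by omega)
  · refine ⟨h.ne, image_filter_val_le_ne_of_apply hg ?_⟩
    rw [Fin.lt_def, Fin.val_succ] at h
    omega

section Words

variable {n : ℕ}

theorem wordProdA_append (l₁ l₂ : List (Fin n)) :
    wordProdA n (l₁ ++ l₂) = wordProdA n l₁ * wordProdA n l₂ := by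
  simp [wordProdA]

theorem wordProdA_cons (i : Fin n) (l : List (Fin n)) :
    wordProdA n (i :: l) = adjTransposition n i * wordProdA n l := by
  simp [wordProdA]

theorem adjTransposition_apply_of_ne {i : Fin n} {p : Fin (n + 1)} (h₁ : p.val ≠ i.val)
    (h₂ : p.val ≠ i.val + 1) : adjTransposition n i p = p :=
  swap_apply_of_ne_of_ne (fun h => h₁ (by simp [h])) (fun h => h₂ (by simp [h]))

theorem val_adjTransposition_apply_le_iff {i : Fin n} {k : ℕ} (hi : i.val ≠ k) (x : Fin (n + 1)) :
    (adjTransposition n i x).val ≤ k ↔ x.val ≤ k := by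
  unfold adjTransposition
  rcases eq_or_ne x i.castSucc with rfl | h₁
  · simp only [swap_apply_left, Fin.val_succ, Fin.val_castSucc]
    omega
  rcases eq_or_ne x i.succ with rfl | h₂
  · simp only [swap_apply_right, Fin.val_succ, Fin.val_castSucc]
    omega
  rw [swap_apply_of_ne_of_ne h₁ h₂]

theorem val_wordProdA_apply_le_iff {l : List (Fin n)} {g : Fin n} (hg : g ∉ l)
    (x : Fin (n + 1)) : (wordProdA n l x).val ≤ g.val ↔ x.val ≤ g.val := by
  induction l with
  | nil => simp [wordProdA]
  | cons i l ih =>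
    rw [wordProdA_cons, Perm.mul_apply, val_adjTransposition_apply_le_iff
      (Fin.val_ne_of_ne (ne_of_mem_of_not_mem List.mem_cons_self hg))]
    exact ih fun h => hg (List.mem_cons_of_mem i h)

theorem wordProdA_apply_of_forall_mem {l : List (Fin n)} {p : Fin (n + 1)}
    (hl : ∀ i ∈ l, p.val ≠ i.val ∧ p.val ≠ i.val + 1) : wordProdA n l p = p := by
  induction l with
  | nil => simp [wordProdA]
  | cons i l ih =>
    obtain ⟨h₁, h₂⟩ := hl i (by simp)
    rw [wordProdA_cons, Perm.mul_apply, ih fun j hj => hl j (List.mem_cons_of_mem i hj),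
      adjTransposition_apply_of_ne h₁ h₂]

theorem wordProdA_apply_castSucc_of_pairwise_lt {u : List (Fin n)} {g : Fin n}
    (hu : u.Pairwise (· < ·)) (hg : g ∈ u) : wordProdA n u g.castSucc = g.succ := by
  obtain ⟨u₁, u₂, rfl⟩ := List.append_of_mem hg
  obtain ⟨-, hu₂, hu₁₂⟩ := List.pairwise_append.mp hu
  have hfix₁ : wordProdA n u₁ g.succ = g.succ := by
    refine wordProdA_apply_of_forall_mem fun i hi => ?_
    have := Fin.lt_def.mp (hu₁₂ i hi g List.mem_cons_self)
    simp only [Fin.val_succ]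
    omega
  have hfix₂ : wordProdA n u₂ g.castSucc = g.castSucc := by
    refine wordProdA_apply_of_forall_mem fun i hi => ?_
    have := Fin.lt_def.mp ((List.pairwise_cons.mp hu₂).1 i hi)
    simp only [Fin.val_castSucc]
    omega
  rw [wordProdA_append, wordProdA_cons, Perm.mul_apply, Perm.mul_apply, hfix₂, adjTransposition,
    swap_apply_left, hfix₁]

theorem wordProdA_apply_succ_of_pairwise_gt {v : List (Fin n)} {g : Fin n}
    (hv : v.Pairwise (· > ·)) (hg : g ∈ v) : wordProdA n v g.succ = g.castSucc := by
  obtain ⟨v₁, v₂, rfl⟩ := List.append_of_mem hg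
  obtain ⟨-, hv₂, hv₁₂⟩ := List.pairwise_append.mp hv
  have hfix₁ : wordProdA n v₁ g.castSucc = g.castSucc := by
    refine wordProdA_apply_of_forall_mem fun i hi => ?_
    have := Fin.lt_def.mp (hv₁₂ i hi g List.mem_cons_self)
    simp only [Fin.val_castSucc]
    omega
  have hfix₂ : wordProdA n v₂ g.succ = g.succ := by
    refine wordProdA_apply_of_forall_mem fun i hi => ?_
    have := Fin.lt_def.mp ((List.pairwise_cons.mp hv₂).1 i hi)
    simp only [Fin.val_succ]
    omega
  rw [wordProdA_append, wordProdA_cons, Perm.mul_apply, Perm.mul_apply, hfix₂, adjTransposition,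
    swap_apply_right, hfix₁]

theorem exists_eq_append_of_sublist_topWordA {w : List (Fin n)} (hw : w.Sublist (topWordA n)) :
    ∃ u v, w = u ++ v ∧ u.Pairwise (· < ·) ∧ v.Pairwise (· > ·) := by
  obtain ⟨u, v, rfl, hu, hv⟩ := List.sublist_append_iff.mp hw
  refine ⟨u, v, rfl, (List.pairwise_lt_finRange n).sublist hu, ?_⟩
  refine List.Pairwise.sublist hv (List.pairwise_reverse.mpr ?_)
  exact (List.pairwise_lt_finRange n).sublist (List.dropLast_sublist _)

end Words

section AscendingDescending

variable {n : ℕ} {u v : List (Fin n)} {g : Fin n}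

theorem wordProdA_append_apply_succ_of_mem_of_mem (hu : u.Pairwise (· < ·))
    (hv : v.Pairwise (· > ·)) (hgu : g ∈ u) (hgv : g ∈ v) :
    wordProdA n (u ++ v) g.succ = g.succ := by
  rw [wordProdA_append, Perm.mul_apply, wordProdA_apply_succ_of_pairwise_gt hv hgv,
    wordProdA_apply_castSucc_of_pairwise_lt hu hgu]

theorem wordProdA_append_symm_apply_succ_lt (hu : u.Pairwise (· < ·)) (hgu : g ∈ u)
    (hgv : g ∉ v) : (wordProdA n (u ++ v)).symm g.succ < g.succ := by
  set V := wordProdA n v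
  have hπ : wordProdA n (u ++ v) (V.symm g.castSucc) = g.succ := by
    rw [wordProdA_append, Perm.mul_apply, apply_symm_apply,
      wordProdA_apply_castSucc_of_pairwise_lt hu hgu]
  have hV : (V.symm g.castSucc).val ≤ g.val :=
    (val_wordProdA_apply_le_iff hgv _).mp (by simp [V])
  rw [(symm_apply_eq _).mpr hπ.symm, Fin.lt_def, Fin.val_succ]
  omega

theorem wordProdA_append_apply_succ_lt (hv : v.Pairwise (· > ·)) (hgu : g ∉ u) (hgv : g ∈ v) :
    wordProdA n (u ++ v) g.succ < g.succ := by
  have hU := val_wordProdA_apply_le_iff hgu g.castSucc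
  rw [wordProdA_append, Perm.mul_apply, wordProdA_apply_succ_of_pairwise_gt hv hgv, Fin.lt_def,
    Fin.val_succ]
  simp only [Fin.val_castSucc, le_refl, iff_true] at hU
  omega

end AscendingDescending

theorem stmt5_general (n : ℕ) (π : Equiv.Perm (Fin (n + 1)))
    (w : List (Fin n)) (hsub : w.Sublist (topWordA n))
    (hprod : wordProdA n w = π) (g : Fin n) :
    (w.count g = 1 ↔
      (π g.succ ≠ g.succ ∧
        (Finset.univ.filter (fun x : Fin (n + 1) => x.val ≤ g.val)).image (fun x => π x) ≠
          Finset.univ.filter (fun x : Fin (n + 1) => x.val ≤ g.val))) ∧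
    (w.count g = 1 → (π.symm g.succ < g.succ ∨ π g.succ < g.succ)) := by
  subst hprod
  obtain ⟨u, v, rfl, hu, hv⟩ := exists_eq_append_of_sublist_topWordA hsub
  have hcount (l : List (Fin n)) (hl : l.Nodup) : l.count g = if g ∈ l then 1 else 0 := by
    split_ifs with h
    exacts [List.count_eq_one_of_mem hl h, List.count_eq_zero.mpr h]
  rw [List.count_append, hcount u hu.nodup, hcount v hv.nodup]
  by_cases hgu : g ∈ u <;> by_cases hgv : g ∈ v
  · simp [hgu, hgv, wordProdA_append_apply_succ_of_mem_of_mem hu hv hgu hgv]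
  · have h : _ ∨ wordProdA n (u ++ v) g.succ < g.succ :=
      Or.inl (wordProdA_append_symm_apply_succ_lt hu hgu hgv)
    simp [hgu, hgv, h, apply_succ_ne_and_image_ne_of_lt h]
  · have h : (wordProdA n (u ++ v)).symm g.succ < g.succ ∨ _ :=
      Or.inr (wordProdA_append_apply_succ_lt hv hgu hgv)
    simp [hgu, hgv, h, apply_succ_ne_and_image_ne_of_lt h]
  · have hgw : g ∉ u ++ v := by simp [hgu, hgv]
    have hS := (image_filter_val_le_eq_self_iff _ _).mpr (val_wordProdA_apply_le_iff hgw)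
    simp [hgu, hgv, hS]

theorem stmt5 (n : ℕ) (hn : 1 ≤ n) (π : Equiv.Perm (Fin (n + 1)))
    (hbool : IsBooleanA n π)
    (w : List (Fin n)) (hsub : w.Sublist (topWordA n)) (hred : ReducedA n w)
    (hprod : wordProdA n w = π) (g : Fin n) :
    (w.count g = 1 ↔
      (π g.succ ≠ g.succ ∧
        (Finset.univ.filter (fun x : Fin (n + 1) => x.val ≤ g.val)).image (fun x => π x) ≠
          Finset.univ.filter (fun x : Fin (n + 1) => x.val ≤ g.val))) ∧
    (w.count g = 1 → (π.symm g.succ < g.succ ∨ π g.succ < g.succ)) :=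
  stmt5_general n π w hsub hprod g
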